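/- arXiv:1502.07202 — 3 statements merged into one kernel-verified Lean document; each statement's English description precedes it below -/
import Mathlib

section
/- Let G be a finite group generated by h, v with commutator c of order N, and let S be the associated regular origami. For every complex irreducible representation π of G, the multiplicity of π in H¹(S; ℂ) equals 2·δ_{π=triv} + dim π − m₀, where m₀ is the dimension of the subspace of π fixed by c and δ_{π=triv} = 1 if π is trivial and 0 otherwise. -/
/-!
Pair `χ_{H¹}` with `χ_π` term by term. The constant `2` contributes `2·δ_{π=triv}` by
orthogonality with the trivial character. The coefficient of `δ_id` simplifies to `|G|`, so that
term contributes `χ_π(1) = dim π`. By Frobenius reciprocity the induced character contributes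
the average of `χ_π` over `⟨c⟩`, which is the dimension `m₀` of the `c`-fixed subspace.
-/

open CategoryTheory Module

universe u

theorem Subgroup.sum_sum_ite_conj_mem_mul {G R : Type*} [Group G] [Fintype G] [CommSemiring R]
    (H : Subgroup G) [DecidablePred (· ∈ H)] (f : G → R)
    (hf : ∀ g s, f (s * g * s⁻¹) = f g) :
    ∑ g, (∑ s, if s * g * s⁻¹ ∈ H then (1 : R) else 0) * f g
      = Fintype.card G * ∑ t : H, f t := by
  have hconj : ∀ s : G, ∑ g, (if s * g * s⁻¹ ∈ H then f g else 0) = ∑ t : H, f t := by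
    intro s
    rw [Fintype.sum_equiv (MulAut.conj s).toEquiv _ (fun g => if g ∈ H then f g else 0)
      (fun g => by simp [hf]), ← Finset.sum_filter]
    exact Finset.sum_subtype _ (by simp) f
  simp_rw [Finset.sum_mul, ite_mul, one_mul, zero_mul]
  rw [Finset.sum_comm]
  simp [hconj]

namespace Representation

variable {k G V : Type*} [Field k] [Group G] [AddCommGroup V] [Module k V]

theorem invariants_comp_zpowers_subtype (ρ : Representation k G V) {c : G}
    (hc : IsOfFinOrder c) :
    invariants (ρ.comp (Subgroup.zpowers c).subtype) = End.eigenspace (ρ c) 1 := by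
  ext x
  rw [mem_invariants, End.mem_eigenspace_iff, one_smul]
  refine ⟨fun hx => hx ⟨c, Subgroup.mem_zpowers c⟩, fun hx ⟨t, ht⟩ => ?_⟩
  obtain ⟨n, rfl⟩ := hc.mem_powers_iff_mem_zpowers.mpr ht
  simpa [End.pow_apply] using Function.iterate_fixed hx n

end Representation

namespace FDRep

variable {k G : Type u} [Field k] [Group G]

theorem character_trivial : (FDRep.of (1 : Representation k G k)).character = 1 := by
  ext g
  simp [character, FDRep.of_ρ']

variable [Fintype G] [CharZero k]

theorem sum_character_zpowers (V : FDRep k G) (c : G) :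
    ∑ t : Subgroup.zpowers c, V.character t
      = (orderOf c : k) * finrank k (End.eigenspace (V.ρ c) 1) := by
  have := invertibleOfNonzero (NeZero.ne (Nat.card (Subgroup.zpowers c) : k))
  have h := Representation.card_inv_mul_sum_char_eq_finrank
    (V.ρ.comp (Subgroup.zpowers c).subtype)
  rw [Representation.invariants_comp_zpowers_subtype _ (isOfFinOrder_of_finite c),
    Nat.card_zpowers] at h
  rw [← h, mul_inv_cancel_left₀ (by exact_mod_cast (orderOf_pos c).ne')]
  rfl

variable [IsAlgClosed k]

instance simple_trivial : Simple (FDRep.of (1 : Representation k G k)) := by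
  rw [simple_iff_char_is_norm_one, character_trivial]
  simp

open Classical in
theorem sum_character_of_simple (V : FDRep k G) [Simple V] :
    ∑ g : G, V.character g = (Fintype.card G : k) * if ∀ g, V.character g = 1 then 1 else 0 := by
  have := invertibleOfNonzero (NeZero.ne (Nat.card G : k))
  have horth := char_orthonormal V (FDRep.of (1 : Representation k G k))
  simp only [character_trivial, Pi.one_apply, mul_one] at horth
  have hiff : Nonempty (V ≅ FDRep.of (1 : Representation k G k)) ↔ ∀ g, V.character g = 1 := by
    refine ⟨fun ⟨i⟩ g => by rw [char_iso i, character_trivial, Pi.one_apply], fun h => ?_⟩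
    by_contra hn
    simp [hn, h] at horth
  simp only [hiff] at horth
  rw [← horth, Nat.card_eq_fintype_card, mul_inv_cancel_left₀ (by simp)]

end FDRep

open Classical in
theorem stmt4_general (G : Type) [Group G] [Fintype G]
    (c : G) (N : ℕ) (hN : N = orderOf c)
    (π : FDRep ℂ G) (hπ : CategoryTheory.Simple π)
    (χH1 : G → ℂ)
    (hχ : ∀ g : G,
      χH1 g = 2
        - (1 / (N : ℂ)) * ∑ s : G, (if s * g * s⁻¹ ∈ Subgroup.zpowers c then (1 : ℂ) else 0)
        + (if g = 1 then
            ((Fintype.card G : ℂ) / (N : ℂ) - 2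
              + 2 * (((Fintype.card G : ℂ) - (Fintype.card G : ℂ) / (N : ℂ)) / 2 + 1))
          else 0)) :
    (1 / (Fintype.card G : ℂ)) * ∑ g : G, χH1 g * (starRingEnd ℂ) (π.character g)
      = 2 * (if ∀ g : G, π.character g = 1 then (1 : ℂ) else 0)
        + (Module.finrank ℂ π.V : ℂ)
        - (Module.finrank ℂ (Module.End.eigenspace (π.ρ c) 1) : ℂ) := by
  set ψ : G → ℂ := fun g => starRingEnd ℂ (π.character g)
  have hN0 : (N : ℂ) ≠ 0 := by rw [hN]; exact_mod_cast (orderOf_pos c).ne'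
  have h_triv : ∑ g, ψ g = Fintype.card G * if ∀ g : G, π.character g = 1 then 1 else 0 := by
    rw [← map_sum, FDRep.sum_character_of_simple]
    split_ifs <;> simp
  have h_ind : ∑ g, (∑ s, if s * g * s⁻¹ ∈ Subgroup.zpowers c then (1 : ℂ) else 0) * ψ g
      = Fintype.card G * (N * finrank ℂ (End.eigenspace (π.ρ c) 1)) := by
    rw [Subgroup.sum_sum_ite_conj_mem_mul _ ψ (fun g s => by simp [ψ]), ← map_sum,
      FDRep.sum_character_zpowers, hN]
    simp
  have h_one : ψ 1 = finrank ℂ π.V := by simp [ψ]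
  have h_expand : ∑ g, χH1 g * ψ g
      = 2 * ∑ g, ψ g
        - 1 / N * ∑ g, (∑ s, if s * g * s⁻¹ ∈ Subgroup.zpowers c then (1 : ℂ) else 0) * ψ g
        + Fintype.card G * ψ 1 := by
    simp only [hχ, add_mul, sub_mul, ite_mul, zero_mul, Finset.sum_add_distrib,
      Finset.sum_sub_distrib, Finset.sum_ite_eq', Finset.mem_univ, if_true, mul_assoc,
      ← Finset.mul_sum]
    ring
  rw [h_expand, h_triv, h_ind, h_one]
  field_simp
  ring

open Classical in
/-- For the regular origami `S` determined by a finite group `G` with two generators `h, v`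
and commutator `c = [h,v]` of order `N`, the character of the `G`-representation `H¹(S;ℂ)`
is the class function `χ_{H¹} = 2 - Ind_{⟨c⟩}^G χ₀ + (|G|/N - 2 + 2·genus(S))·δ_id`
(hypothesis `hχ`, with `genus(S) = (|G| - |G|/N)/2 + 1`).  The multiplicity
`⟨χ_{H¹}, χ_π⟩_G` of any complex irreducible representation `π` of `G` in `H¹(S;ℂ)`
equals `2·δ_{π = triv} + dim π - m₀`, where `m₀` is the dimension of the subspace of `π`
fixed by `c`. -/
theorem stmt4 (G : Type) [Group G] [Fintype G] (h v : G)
    (hgen : Subgroup.closure ({h, v} : Set G) = ⊤)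
    (c : G) (hc : c = h * v * h⁻¹ * v⁻¹) (N : ℕ) (hN : N = orderOf c)
    (π : FDRep ℂ G) (hπ : CategoryTheory.Simple π)
    (χH1 : G → ℂ)
    (hχ : ∀ g : G,
      χH1 g = 2
        - (1 / (N : ℂ)) * ∑ s : G, (if s * g * s⁻¹ ∈ Subgroup.zpowers c then (1 : ℂ) else 0)
        + (if g = 1 then
            ((Fintype.card G : ℂ) / (N : ℂ) - 2
              + 2 * (((Fintype.card G : ℂ) - (Fintype.card G : ℂ) / (N : ℂ)) / 2 + 1))
          else 0)) :
    (1 / (Fintype.card G : ℂ)) * ∑ g : G, χH1 g * (starRingEnd ℂ) (π.character g)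
      = 2 * (if ∀ g : G, π.character g = 1 then (1 : ℂ) else 0)
        + (Module.finrank ℂ π.V : ℂ)
        - (Module.finrank ℂ (Module.End.eigenspace (π.ρ c) 1) : ℂ) :=
  stmt4_general G c N hN π hπ χH1 hχ
end

section
/- Let N ≥ 1 and let m₀, ..., m_{N−1} be real numbers with Σ m_i = d. Then the limit as r → 1 (for real r with |r| < 1) of (Σ_{i=0}^{N−1} r^i m_i)/(1 − r^N) − (d/N)·1/(1 − r) exists and equals −(1/N)·Σ_{i=0}^{N−1} (i − (N−1)/2)·m_i. -/
/-!
Subtracting `d / N` from every `m i` splits the expression as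
`(∑ cᵢ rⁱ) / ((1 - r) ∑ rⁱ)` with `∑ cᵢ = 0`, because `1 - r ^ N = (1 - r) ∑_{i<N} rⁱ` makes the
`d / N` part cancel the pole `d / (N (1 - r))` exactly. Since `∑ cᵢ rⁱ` vanishes at `r = 1`, the
first factor is minus a difference quotient and tends to `-∑ i cᵢ`, while `∑ rⁱ → N`.
-/

open Filter Topology Finset

theorem tendsto_sum_mul_pow_div_one_sub (N : ℕ) (c : ℕ → ℝ) (hc : ∑ i ∈ range N, c i = 0) :
    Tendsto (fun r : ℝ => (∑ i ∈ range N, c i * r ^ i) / (1 - r)) (𝓝[≠] 1)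
      (𝓝 (-∑ i ∈ range N, c i * i)) := by
  set g : ℝ → ℝ := fun r => ∑ i ∈ range N, c i * r ^ i
  have hg : HasDerivAt g (∑ i ∈ range N, c i * i) 1 := by
    simpa using HasDerivAt.fun_sum fun i _ => (hasDerivAt_pow i (1 : ℝ)).const_mul (c i)
  have hg1 : g 1 = 0 := by simpa [g] using hc
  refine (hasDerivAt_iff_tendsto_slope.mp hg).neg.congr fun r => ?_
  rw [slope_def_field, hg1, sub_zero, ← div_neg, neg_sub]

theorem sum_range_natCast_eq_mul_sub_one_div_two (N : ℕ) : ∑ i ∈ range N, (i : ℝ) = N * (N - 1) / 2 := by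
  induction N with
  | zero => simp
  | succ n ih => rw [sum_range_succ, ih]; push_cast; ring

theorem sum_sub_average_mul_eq_sum_centered_mul (N : ℕ) (hN : (N : ℝ) ≠ 0) (m : ℕ → ℝ) :
    ∑ i ∈ range N, (m i - (∑ j ∈ range N, m j) / N) * i
      = ∑ i ∈ range N, ((i : ℝ) - (N - 1) / 2) * m i := by
  simp only [sub_mul, sum_sub_distrib, ← mul_sum, sum_range_natCast_eq_mul_sub_one_div_two, mul_comm (m _)]
  field_simp

theorem div_one_sub_pow_sub_div_one_sub (N : ℕ) (hN : (N : ℝ) ≠ 0) (m : ℕ → ℝ) (d r : ℝ)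
    (hr : r ≠ 1) (hS : ∑ i ∈ range N, r ^ i ≠ 0) :
    (∑ i ∈ range N, r ^ i * m i) / (1 - r ^ N) - d / N * (1 / (1 - r))
      = (∑ i ∈ range N, (m i - d / N) * r ^ i) / (1 - r) * (∑ i ∈ range N, r ^ i)⁻¹ := by
  have hr' : 1 - r ≠ 0 := sub_ne_zero.mpr hr.symm
  rw [← mul_neg_geom_sum]
  simp only [sub_mul, sum_sub_distrib, ← mul_sum, mul_comm (m _)]
  field_simp

/-- For `N ≥ 1` and reals `m₀, …, m_{N-1}` with `∑ m_i = d`, the limit as `r → 1`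
(for real `r` with `|r| < 1`) of
`(∑_{i<N} r^i m_i)/(1 - r^N) - (d/N)·1/(1-r)` exists and equals
`-(1/N)·∑_{i<N} (i - (N-1)/2)·m_i`. -/
theorem stmt6 (N : ℕ) (hN : 1 ≤ N) (m : ℕ → ℝ) (d : ℝ)
    (hd : ∑ i ∈ Finset.range N, m i = d) :
    Filter.Tendsto
      (fun r : ℝ =>
        (∑ i ∈ Finset.range N, r ^ i * m i) / (1 - r ^ N) - (d / N) * (1 / (1 - r)))
      (nhdsWithin 1 (Set.Ioo (-1 : ℝ) 1))
      (nhds (-(1 / N) * ∑ i ∈ Finset.range N, ((i : ℝ) - (N - 1) / 2) * m i)) := by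
  have hN0 : (N : ℝ) ≠ 0 := Nat.cast_ne_zero.mpr (by omega)
  have hc : ∑ i ∈ range N, (m i - d / N) = 0 := by
    rw [sum_sub_distrib, sum_const, card_range, nsmul_eq_mul, mul_div_cancel₀ _ hN0, hd, sub_self]
  have hS : Tendsto (fun r : ℝ => ∑ i ∈ range N, r ^ i) (𝓝 1) (𝓝 N) := by
    simpa using (continuous_finsetSum (range N) fun i _ => continuous_pow i).tendsto (1 : ℝ)
  have hIoo : 𝓝[Set.Ioo (-1 : ℝ) 1] 1 ≤ 𝓝[≠] 1 :=
    nhdsWithin_mono _ fun r (hr : r ∈ Set.Ioo (-1 : ℝ) 1) => hr.2.ne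
  have hlim := ((tendsto_sum_mul_pow_div_one_sub N _ hc).mono_left hIoo).mul
    ((hS.mono_left nhdsWithin_le_nhds).inv₀ hN0)
  rw [← sum_sub_average_mul_eq_sum_centered_mul N hN0, hd, one_div, neg_mul, mul_comm, ← neg_mul]
  refine hlim.congr' (eventually_nhdsWithin_of_forall fun r hr => ?_)
  exact (div_one_sub_pow_sub_div_one_sub N hN0 m d r hr.2.ne
    (geom_sum_ne_zero hr.1.ne' (by omega))).symm
end

section
/- The 12×12 integer matrix C·B (product of the explicit matrices C and B given below) has characteristic polynomial (x−1)⁴·(x²−10x+1)⁴, and its eigenspace for eigenvalue 1 contains the four standard-basis combinations e₁+e₅, e₂+e₆, e₃+e₇, e₄+e₈. -/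
open Polynomial

/-- The matrix `B` of the action of the Dehn multitwist in direction `(3,-1)`. -/
def matB : Matrix (Fin 12) (Fin 12) ℚ :=
  !![2,1,1,0,-1,-1,-1,0,-1,0,0,1;
     -1,0,0,-1,1,1,0,1,0,1,0,0;
     0,1,1,0,0,-1,0,0,0,0,0,-1;
     -1,0,0,1,1,0,0,0,0,0,-1,-1;
     -1,1,-1,0,2,-1,1,0,1,0,0,-3;
     0,0,1,0,0,1,-1,0,-1,0,-1,1;
     -1,-2,-1,-1,1,2,2,1,1,1,1,0;
     1,0,0,0,-1,0,0,1,0,0,1,1;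
     1,1,1,-1,-1,-1,-1,1,0,1,1,1;
     -1,-1,1,-1,1,1,-1,1,-1,2,-1,1;
     -1,1,-1,1,1,-1,1,-1,1,-1,0,-3;
     -1,-1,-1,-1,1,1,1,1,1,1,1,0]

/-- The matrix `C` of the action of the Dehn multitwist in direction `(-1,3)`. -/
def matC : Matrix (Fin 12) (Fin 12) ℚ :=
  !![2,1,-1,0,-1,-1,1,0,0,-3,1,0;
     1,2,2,-1,-1,-1,-2,1,1,0,1,1;
     0,-1,1,0,0,1,0,0,-1,1,-1,0;
     1,0,0,1,-1,0,0,0,-1,-1,0,0;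
     -1,-1,-1,0,2,1,1,0,0,1,-1,0;
     0,0,-1,0,0,1,1,0,0,-1,0,0;
     1,0,1,-1,-1,0,0,1,0,0,0,1;
     -1,0,0,0,1,0,0,1,1,1,0,0;
     1,1,-1,1,-1,-1,1,-1,0,-3,1,-1;
     1,1,1,-1,-1,-1,-1,1,1,0,1,1;
     -1,-1,-1,-1,1,1,1,1,1,1,0,1;
     1,-1,1,-1,-1,1,-1,1,-1,1,-1,2]

/-!
The polynomial `(X - 1) * (X ^ 2 - 10 * X + 1)` annihilates `C * B` (a direct computation).
Any annihilating polynomial `q` of an `n × n` matrix `M` satisfies `charpoly M ∣ q ^ n`: take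
determinants in `X • 1 - M ∣ q(X) • 1 - q(M) = q(X) • 1`, a divisibility in `Matrix n n R[X]`.
Since `X - 1` and `X ^ 2 - 10 * X + 1` are prime, the monic `charpoly (C * B)` equals
`(X - 1) ^ i * (X ^ 2 - 10 * X + 1) ^ j`, and its degree `12 = i + 2 j` and trace
`44 = i + 10 j` force `i = j = 4`.
-/

theorem Matrix.charmatrix_dvd_scalar_of_aeval_eq_zero {R n : Type*} [CommRing R] [Fintype n]
    [DecidableEq n] {M : Matrix n n R} {q : R[X]} (hq : aeval M q = 0) :
    M.charmatrix ∣ Matrix.scalar n q := by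
  -- `Y - X ∣ q(Y) - q(X)` in `R[X][Y]`, then evaluate at `Y := M`
  have hdvd : X - C X ∣ q.map (algebraMap R R[X]) - C q := by
    simpa [eval_map] using X_sub_C_dvd_sub_C_eval (a := (X : R[X])) (p := q.map C)
  have := map_dvd (aeval (R := R[X]) ((Algebra.ofId R R[X]).mapMatrix M)) hdvd
  rwa [map_sub, map_sub, aeval_X, aeval_C, aeval_map_algebraMap, aeval_algHom_apply, hq,
    map_zero, zero_sub, dvd_neg, ← neg_dvd, neg_sub, aeval_C] at this

theorem Matrix.charpoly_dvd_pow_of_aeval_eq_zero {R n : Type*} [CommRing R] [Fintype n]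
    [DecidableEq n] {M : Matrix n n R} {q : R[X]} (hq : aeval M q = 0) :
    M.charpoly ∣ q ^ Fintype.card n := by
  simpa [Matrix.charpoly, Matrix.det_diagonal] using
    map_dvd Matrix.detMonoidHom (Matrix.charmatrix_dvd_scalar_of_aeval_eq_zero hq)

theorem Polynomial.exists_eq_pow_mul_pow_of_dvd {K : Type*} [Field K] {p q r : K[X]}
    (hp : Prime p) (hq : Prime q) (hpm : p.Monic) (hqm : q.Monic) (hr : r.Monic) {m k : ℕ}
    (h : r ∣ p ^ m * q ^ k) : ∃ i j, r = p ^ i * q ^ j := by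
  obtain ⟨a, b, ha, hb, rfl⟩ := exists_dvd_and_dvd_of_dvd_mul h
  obtain ⟨i, -, hi⟩ := (dvd_prime_pow hp m).1 ha
  obtain ⟨j, -, hj⟩ := (dvd_prime_pow hq k).1 hb
  exact ⟨i, j, eq_of_monic_of_associated hr ((hpm.pow i).mul (hqm.pow j)) (hi.mul_mul hj)⟩

theorem Matrix.exists_charpoly_eq_pow_mul_pow_of_aeval_eq_zero {K n : Type*} [Field K]
    [Fintype n] [DecidableEq n] {M : Matrix n n K} {p q : K[X]} (hp : Prime p) (hq : Prime q)
    (hpm : p.Monic) (hqm : q.Monic) (hM : aeval M (p * q) = 0) :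
    ∃ i j : ℕ, M.charpoly = p ^ i * q ^ j ∧
      i * p.natDegree + j * q.natDegree = Fintype.card n ∧
      M.trace = -(i • p.nextCoeff + j • q.nextCoeff) := by
  have hdvd := Matrix.charpoly_dvd_pow_of_aeval_eq_zero hM
  rw [mul_pow] at hdvd
  obtain ⟨i, j, hij⟩ := exists_eq_pow_mul_pow_of_dvd hp hq hpm hqm M.charpoly_monic hdvd
  refine ⟨i, j, hij, ?_, ?_⟩
  · rw [← M.charpoly_natDegree_eq_dim, hij, (hpm.pow i).natDegree_mul (hqm.pow j),
      hpm.natDegree_pow, hqm.natDegree_pow]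
  · rw [M.trace_eq_neg_charpoly_nextCoeff, hij, (hpm.pow i).nextCoeff_mul (hqm.pow j),
      hpm.nextCoeff_pow, hqm.nextCoeff_pow]

theorem monic_X_sq_sub_ten_mul_X_add_one : (X ^ 2 - 10 * X + 1 : ℚ[X]).Monic := by
  monicity!

theorem natDegree_X_sq_sub_ten_mul_X_add_one : (X ^ 2 - 10 * X + 1 : ℚ[X]).natDegree = 2 := by
  compute_degree!

theorem nextCoeff_X_sq_sub_ten_mul_X_add_one : (X ^ 2 - 10 * X + 1 : ℚ[X]).nextCoeff = -10 := by
  rw [nextCoeff_of_natDegree_pos (by rw [natDegree_X_sq_sub_ten_mul_X_add_one]; norm_num),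
    natDegree_X_sq_sub_ten_mul_X_add_one]
  simp [coeff_X, coeff_one]

theorem irreducible_X_sq_sub_ten_mul_X_add_one : Irreducible (X ^ 2 - 10 * X + 1 : ℚ[X]) := by
  refine irreducible_of_degree_le_three_of_not_isRoot
    (by simp [natDegree_X_sq_sub_ten_mul_X_add_one]) fun x hx => ?_
  have h24 : IsSquare (24 : ℚ) := ⟨x - 5, by simp at hx; linear_combination -hx⟩
  norm_num at h24

theorem aeval_matC_mul_matB_eq_zero :
    aeval (matC * matB) ((X - C 1) * (X ^ 2 - 10 * X + 1) : ℚ[X]) = 0 := by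
  simp only [map_mul, map_sub, map_add, map_pow, map_one, aeval_X, map_ofNat]
  decide +kernel

theorem trace_matC_mul_matB : (matC * matB).trace = 44 := by
  decide +kernel

/-- The 12×12 integer matrix `C·B` has characteristic polynomial
`(x-1)⁴·(x²-10x+1)⁴`, and its eigenspace for the eigenvalue `1` contains
`e₁+e₅`, `e₂+e₆`, `e₃+e₇`, `e₄+e₈`. -/
theorem stmt18 :
    (matC * matB).charpoly = (X - 1) ^ 4 * (X ^ 2 - 10 * X + 1) ^ 4 ∧
    (matC * matB).mulVec (Pi.single 0 1 + Pi.single 4 1)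
      = Pi.single 0 1 + Pi.single 4 1 ∧
    (matC * matB).mulVec (Pi.single 1 1 + Pi.single 5 1)
      = Pi.single 1 1 + Pi.single 5 1 ∧
    (matC * matB).mulVec (Pi.single 2 1 + Pi.single 6 1)
      = Pi.single 2 1 + Pi.single 6 1 ∧
    (matC * matB).mulVec (Pi.single 3 1 + Pi.single 7 1)
      = Pi.single 3 1 + Pi.single 7 1 := by
  refine ⟨?_, by decide +kernel, by decide +kernel, by decide +kernel, by decide +kernel⟩
  obtain ⟨i, j, hchar, hdeg, htrace⟩ :=
    Matrix.exists_charpoly_eq_pow_mul_pow_of_aeval_eq_zero (prime_X_sub_C 1)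
      irreducible_X_sq_sub_ten_mul_X_add_one.prime (monic_X_sub_C 1)
      monic_X_sq_sub_ten_mul_X_add_one aeval_matC_mul_matB_eq_zero
  rw [natDegree_X_sub_C, natDegree_X_sq_sub_ten_mul_X_add_one, Fintype.card_fin] at hdeg
  rw [trace_matC_mul_matB, nextCoeff_X_sub_C, nextCoeff_X_sq_sub_ten_mul_X_add_one,
    nsmul_eq_mul, nsmul_eq_mul] at htrace
  have hij : i + 10 * j = 44 := by exact_mod_cast (by linarith : (i + 10 * j : ℚ) = 44)
  obtain ⟨rfl, rfl⟩ : i = 4 ∧ j = 4 := by omega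
  simpa using hchar
end
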